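/- arXiv:2205.06179 — 5 statements merged into one kernel-verified Lean document; each statement's English description precedes it below -/
import Mathlib

section
/- The vector field v⁰ on ℝ³ defined by v⁰₁(x) = sin(αx₁+ξ₁)cos(αx₂+ξ₂)sin(αx₃+ξ₃) − sin(αx₁+ξ₂)cos(αx₃+ξ₁)sin(αx₂+ξ₃), with v⁰₂ and v⁰₃ obtained by cyclically permuting (x₁,x₂,x₃), is divergence-free: ∂v⁰₁/∂x₁ + ∂v⁰₂/∂x₂ + ∂v⁰₃/∂x₃ = 0 for all x ∈ ℝ³. -/
open Real

noncomputable def pd1 (f : ℝ → ℝ → ℝ → ℝ) : ℝ → ℝ → ℝ → ℝ :=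
  fun x₁ x₂ x₃ => deriv (fun y => f y x₂ x₃) x₁

noncomputable def pd2 (f : ℝ → ℝ → ℝ → ℝ) : ℝ → ℝ → ℝ → ℝ :=
  fun x₁ x₂ x₃ => deriv (fun y => f x₁ y x₃) x₂

noncomputable def pd3 (f : ℝ → ℝ → ℝ → ℝ) : ℝ → ℝ → ℝ → ℝ :=
  fun x₁ x₂ x₃ => deriv (fun y => f x₁ x₂ y) x₃

noncomputable def lap3 (f : ℝ → ℝ → ℝ → ℝ) : ℝ → ℝ → ℝ → ℝ :=
  fun x₁ x₂ x₃ => pd1 (pd1 f) x₁ x₂ x₃ + pd2 (pd2 f) x₁ x₂ x₃ + pd3 (pd3 f) x₁ x₂ x₃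

/-- General trigonometric field, first component. -/
noncomputable def vgen (α ξ₁ ξ₂ ξ₃ x₁ x₂ x₃ : ℝ) : ℝ :=
  sin (α * x₁ + ξ₁) * cos (α * x₂ + ξ₂) * sin (α * x₃ + ξ₃)
    - sin (α * x₁ + ξ₂) * cos (α * x₃ + ξ₁) * sin (α * x₂ + ξ₃)

lemma hd_sin (α c A B y : ℝ) :
    HasDerivAt (fun t => sin (α * t + c) * A * B) (cos (α * y + c) * α * A * B) y := by
  have h : HasDerivAt (fun t : ℝ => α * t + c) α y :=
    by simpa using ((hasDerivAt_id y).const_mul α).add_const c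
  exact (h.sin.mul_const A).mul_const B

lemma deriv_vgen_like (α c₁ c₂ A₁ B₁ A₂ B₂ y : ℝ) :
    deriv (fun t => sin (α * t + c₁) * A₁ * B₁ - sin (α * t + c₂) * A₂ * B₂) y
      = cos (α * y + c₁) * α * A₁ * B₁ - cos (α * y + c₂) * α * A₂ * B₂ :=
  ((hd_sin α c₁ A₁ B₁ y).sub (hd_sin α c₂ A₂ B₂ y)).deriv

theorem divergence_free_vgen (α ξ₁ ξ₂ ξ₃ x₁ x₂ x₃ : ℝ) :
    pd1 (vgen α ξ₁ ξ₂ ξ₃) x₁ x₂ x₃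
      + pd2 (fun a b c => vgen α ξ₁ ξ₂ ξ₃ b c a) x₁ x₂ x₃
      + pd3 (fun a b c => vgen α ξ₁ ξ₂ ξ₃ c a b) x₁ x₂ x₃ = 0 := by
  simp only [pd1, pd2, pd3, vgen, deriv_vgen_like]
  ring
end

section
/- The time-dependent velocity field vᵢ(x,t) = v⁰ᵢ(x)·exp(−3α²κt), where v⁰ is the phase-shifted trigonometric field with ξ₁=−π/3, ξ₂=π/3, ξ₃=π/2, satisfies the heat equation ∂vᵢ/∂t = κ Δvᵢ for all x ∈ ℝ³, t ∈ ℝ, and each i = 1,2,3. -/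
/-!
Each term of `V1` is a product `g₁ x₁ * g₂ x₂ * g₃ x₃` of one-variable solutions of the
oscillator equation `g'' = -α² g` (shifted sines and cosines of frequency `α`), so `V1` is an
eigenfunction of the Laplacian with eigenvalue `-3α²`; so are `V2` and `V3`, since the Laplacian
commutes with cyclic permutations of the coordinates. Any such eigenfunction times
`exp (-3α²κt)` solves the heat equation.
-/

open Real

/-- First component of the field with phases ξ₁ = -π/3, ξ₂ = π/3, ξ₃ = π/2. -/
noncomputable def V1 (α x₁ x₂ x₃ : ℝ) : ℝ :=
  sin (α * x₁ - π/3) * cos (α * x₂ + π/3) * sin (α * x₃ + π/2)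
    - sin (α * x₁ + π/3) * cos (α * x₃ - π/3) * sin (α * x₂ + π/2)

noncomputable def V2 (α x₁ x₂ x₃ : ℝ) : ℝ := V1 α x₂ x₃ x₁

noncomputable def V3 (α x₁ x₂ x₃ : ℝ) : ℝ := V1 α x₃ x₁ x₂

def SolvesOscillator (α : ℝ) (g : ℝ → ℝ) : Prop :=
  Differentiable ℝ g ∧ Differentiable ℝ (deriv g) ∧ ∀ x, deriv (deriv g) x = -α ^ 2 * g x

namespace SolvesOscillator

variable {α : ℝ} {g h : ℝ → ℝ}

theorem sub (hg : SolvesOscillator α g) (hh : SolvesOscillator α h) :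
    SolvesOscillator α (fun x => g x - h x) := by
  obtain ⟨hg₀, hg₁, hg₂⟩ := hg
  obtain ⟨hh₀, hh₁, hh₂⟩ := hh
  have hd : deriv (fun x => g x - h x) = fun x => deriv g x - deriv h x :=
    funext fun x => deriv_fun_sub (hg₀ x) (hh₀ x)
  refine ⟨hg₀.sub hh₀, hd ▸ hg₁.sub hh₁, fun x => ?_⟩
  rw [hd, deriv_fun_sub (hg₁ x) (hh₁ x), hg₂, hh₂]
  ring

theorem mul_const (hg : SolvesOscillator α g) (c : ℝ) :
    SolvesOscillator α (fun x => g x * c) := by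
  obtain ⟨hg₀, hg₁, hg₂⟩ := hg
  have hd : deriv (fun x => g x * c) = fun x => deriv g x * c :=
    deriv_mul_const_field' _
  refine ⟨hg₀.mul_const c, hd ▸ hg₁.mul_const c, fun x => ?_⟩
  rw [hd, deriv_mul_const_field, hg₂]
  ring

theorem const_mul (hg : SolvesOscillator α g) (c : ℝ) :
    SolvesOscillator α (fun x => c * g x) := by
  simpa only [mul_comm c] using hg.mul_const c

end SolvesOscillator

theorem solvesOscillator_sin (α c : ℝ) : SolvesOscillator α (fun x => sin (α * x + c)) := by
  have hlin (x : ℝ) : HasDerivAt (fun y => α * y + c) α x := by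
    simpa using ((hasDerivAt_id x).const_mul α).add_const c
  have hd : deriv (fun x => sin (α * x + c)) = fun x => cos (α * x + c) * α :=
    funext fun x => (hlin x).sin.deriv
  refine ⟨fun x => (hlin x).sin.differentiableAt,
    hd ▸ fun x => ((hlin x).cos.mul_const α).differentiableAt, fun x => ?_⟩
  rw [hd, ((hlin x).cos.mul_const α).deriv]
  ring

theorem solvesOscillator_cos (α c : ℝ) : SolvesOscillator α (fun x => cos (α * x + c)) := by
  simpa only [← add_assoc, sin_add_pi_div_two] using solvesOscillator_sin α (c + π / 2)

theorem lap3_sub_of_solvesOscillator {α : ℝ} {g₁ g₂ g₃ h₁ h₂ h₃ : ℝ → ℝ}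
    (hg₁ : SolvesOscillator α g₁) (hg₂ : SolvesOscillator α g₂) (hg₃ : SolvesOscillator α g₃)
    (hh₁ : SolvesOscillator α h₁) (hh₂ : SolvesOscillator α h₂) (hh₃ : SolvesOscillator α h₃)
    (x₁ x₂ x₃ : ℝ) :
    lap3 (fun a b c => g₁ a * g₂ b * g₃ c - h₁ a * h₂ b * h₃ c) x₁ x₂ x₃
      = -3 * α ^ 2 * (g₁ x₁ * g₂ x₂ * g₃ x₃ - h₁ x₁ * h₂ x₂ * h₃ x₃) := by
  -- `eᵢ`: the section in the `i`-th variable is again a solution, the other factors being constants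
  have e₁ := (((hg₁.mul_const (g₂ x₂)).mul_const (g₃ x₃)).sub
    ((hh₁.mul_const (h₂ x₂)).mul_const (h₃ x₃))).2.2 x₁
  have e₂ := (((hg₂.const_mul (g₁ x₁)).mul_const (g₃ x₃)).sub
    ((hh₂.const_mul (h₁ x₁)).mul_const (h₃ x₃))).2.2 x₂
  have e₃ := ((hg₃.const_mul (g₁ x₁ * g₂ x₂)).sub (hh₃.const_mul (h₁ x₁ * h₂ x₂))).2.2 x₃
  simp only [lap3, pd1, pd2, pd3]
  rw [e₁, e₂, e₃]
  ring

theorem lap3_comp_cycle (f : ℝ → ℝ → ℝ → ℝ) (x₁ x₂ x₃ : ℝ) :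
    lap3 (fun a b c => f b c a) x₁ x₂ x₃ = lap3 f x₂ x₃ x₁ := by
  simp only [lap3, pd1, pd2, pd3]
  ring

theorem lap3_mul_const (f : ℝ → ℝ → ℝ → ℝ) (K x₁ x₂ x₃ : ℝ) :
    lap3 (fun a b c => f a b c * K) x₁ x₂ x₃ = lap3 f x₁ x₂ x₃ * K := by
  simp only [lap3, pd1, pd2, pd3, deriv_mul_const_field]
  ring

theorem lap3_V1 (α x₁ x₂ x₃ : ℝ) : lap3 (V1 α) x₁ x₂ x₃ = -3 * α ^ 2 * V1 α x₁ x₂ x₃ := by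
  have hV : V1 α = fun a b c => sin (α * a + -(π / 3)) * cos (α * b + π / 3) * sin (α * c + π / 2)
      - sin (α * a + π / 3) * sin (α * b + π / 2) * cos (α * c + -(π / 3)) := by
    funext a b c
    simp only [V1, ← sub_eq_add_neg]
    ring
  rw [hV]
  exact lap3_sub_of_solvesOscillator (solvesOscillator_sin _ _) (solvesOscillator_cos _ _)
    (solvesOscillator_sin _ _) (solvesOscillator_sin _ _) (solvesOscillator_sin _ _)
    (solvesOscillator_cos _ _) x₁ x₂ x₃

theorem lap3_V2 (α x₁ x₂ x₃ : ℝ) : lap3 (V2 α) x₁ x₂ x₃ = -3 * α ^ 2 * V2 α x₁ x₂ x₃ :=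
  (lap3_comp_cycle (V1 α) x₁ x₂ x₃).trans (lap3_V1 α x₂ x₃ x₁)

theorem lap3_V3 (α x₁ x₂ x₃ : ℝ) : lap3 (V3 α) x₁ x₂ x₃ = -3 * α ^ 2 * V3 α x₁ x₂ x₃ :=
  (lap3_comp_cycle (V2 α) x₁ x₂ x₃).trans (lap3_V2 α x₂ x₃ x₁)

theorem heat_of_lap3_eq_mul {f : ℝ → ℝ → ℝ → ℝ} {μ : ℝ}
    (hf : ∀ x₁ x₂ x₃, lap3 f x₁ x₂ x₃ = μ * f x₁ x₂ x₃) (κ x₁ x₂ x₃ t : ℝ) :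
    deriv (fun s => f x₁ x₂ x₃ * exp (μ * κ * s)) t
      = κ * lap3 (fun a b c => f a b c * exp (μ * κ * t)) x₁ x₂ x₃ := by
  have hlin : HasDerivAt (fun s => μ * κ * s) (μ * κ) t := by
    simpa using (hasDerivAt_id t).const_mul (μ * κ)
  rw [(hlin.exp.const_mul _).deriv, lap3_mul_const, hf]
  ring

theorem heat_equation_solution_general (α κ : ℝ) (x₁ x₂ x₃ t : ℝ) :
    deriv (fun s => V1 α x₁ x₂ x₃ * exp (-3 * α ^ 2 * κ * s)) t
      = κ * lap3 (fun a b c => V1 α a b c * exp (-3 * α ^ 2 * κ * t)) x₁ x₂ x₃ ∧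
    deriv (fun s => V2 α x₁ x₂ x₃ * exp (-3 * α ^ 2 * κ * s)) t
      = κ * lap3 (fun a b c => V2 α a b c * exp (-3 * α ^ 2 * κ * t)) x₁ x₂ x₃ ∧
    deriv (fun s => V3 α x₁ x₂ x₃ * exp (-3 * α ^ 2 * κ * s)) t
      = κ * lap3 (fun a b c => V3 α a b c * exp (-3 * α ^ 2 * κ * t)) x₁ x₂ x₃ :=
  ⟨heat_of_lap3_eq_mul (lap3_V1 α) κ x₁ x₂ x₃ t, heat_of_lap3_eq_mul (lap3_V2 α) κ x₁ x₂ x₃ t,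
    heat_of_lap3_eq_mul (lap3_V3 α) κ x₁ x₂ x₃ t⟩

theorem heat_equation_solution (α κ : ℝ) (hκ : 0 < κ) (x₁ x₂ x₃ t : ℝ) :
    deriv (fun s => V1 α x₁ x₂ x₃ * exp (-3 * α ^ 2 * κ * s)) t
      = κ * lap3 (fun a b c => V1 α a b c * exp (-3 * α ^ 2 * κ * t)) x₁ x₂ x₃ ∧
    deriv (fun s => V2 α x₁ x₂ x₃ * exp (-3 * α ^ 2 * κ * s)) t
      = κ * lap3 (fun a b c => V2 α a b c * exp (-3 * α ^ 2 * κ * t)) x₁ x₂ x₃ ∧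
    deriv (fun s => V3 α x₁ x₂ x₃ * exp (-3 * α ^ 2 * κ * s)) t
      = κ * lap3 (fun a b c => V3 α a b c * exp (-3 * α ^ 2 * κ * t)) x₁ x₂ x₃ :=
  heat_equation_solution_general α κ x₁ x₂ x₃ t
end

section
/- For the field v⁰ with phases ξ₁=−π/3, ξ₂=π/3, ξ₃=π/2, the convective term g⁰₁ = Σⱼ v⁰ⱼ ∂v⁰₁/∂xⱼ equals −(3α/8)sin(2αx₁) − (3α/32)sin(2αx₁)[cos(2αx₂)+cos(2αx₃)] − (3√3α/32)cos(2αx₁)[cos(2αx₃)−cos(2αx₂)] + (3√3α/32)sin(2αx₁)[sin(2αx₂)−sin(2αx₃)] + (3α/32)cos(2αx₁)[sin(2αx₃)+sin(2αx₂)]. -/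
open Real

theorem hasDerivAt_sin_mul_add (α c x : ℝ) :
    HasDerivAt (fun y => sin (α * y + c)) (α * cos (α * x + c)) x := by
  simpa [mul_comm] using (((hasDerivAt_id x).const_mul α).add_const c).sin

theorem hasDerivAt_cos_mul_add (α c x : ℝ) :
    HasDerivAt (fun y => cos (α * y + c)) (-(α * sin (α * x + c))) x := by
  simpa [mul_comm] using (((hasDerivAt_id x).const_mul α).add_const c).cos

section

variable (α x₁ x₂ x₃ : ℝ)

theorem pd1_V1 : pd1 (V1 α) x₁ x₂ x₃ =
    α * (cos (α * x₁ - π/3) * cos (α * x₂ + π/3) * sin (α * x₃ + π/2)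
      - cos (α * x₁ + π/3) * cos (α * x₃ - π/3) * sin (α * x₂ + π/2)) :=
  ((((hasDerivAt_sin_mul_add α (-(π/3)) x₁).mul_const _).mul_const _).sub
    (((hasDerivAt_sin_mul_add α (π/3) x₁).mul_const _).mul_const _)).deriv.trans
    (by rw [← sub_eq_add_neg]; ring)

theorem pd2_V1 : pd2 (V1 α) x₁ x₂ x₃ =
    -α * (sin (α * x₁ - π/3) * sin (α * x₂ + π/3) * sin (α * x₃ + π/2)
      + sin (α * x₁ + π/3) * cos (α * x₃ - π/3) * cos (α * x₂ + π/2)) :=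
  ((((hasDerivAt_cos_mul_add α (π/3) x₂).const_mul _).mul_const _).sub
    ((hasDerivAt_sin_mul_add α (π/2) x₂).const_mul _)).deriv.trans (by ring)

theorem pd3_V1 : pd3 (V1 α) x₁ x₂ x₃ =
    α * (sin (α * x₁ - π/3) * cos (α * x₂ + π/3) * cos (α * x₃ + π/2)
      + sin (α * x₁ + π/3) * sin (α * x₃ - π/3) * sin (α * x₂ + π/2)) :=
  (((hasDerivAt_sin_mul_add α (π/2) x₃).const_mul _).sub
    (((hasDerivAt_cos_mul_add α (-(π/3)) x₃).const_mul _).mul_const _)).deriv.trans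
    (by rw [← sub_eq_add_neg]; ring)

end

theorem convective_term_g1 (α x₁ x₂ x₃ : ℝ) :
    V1 α x₁ x₂ x₃ * pd1 (V1 α) x₁ x₂ x₃
      + V2 α x₁ x₂ x₃ * pd2 (V1 α) x₁ x₂ x₃
      + V3 α x₁ x₂ x₃ * pd3 (V1 α) x₁ x₂ x₃
    = -(3*α/8) * sin (2*α*x₁)
      - (3*α/32) * sin (2*α*x₁) * (cos (2*α*x₂) + cos (2*α*x₃))
      - (3*Real.sqrt 3*α/32) * cos (2*α*x₁) * (cos (2*α*x₃) - cos (2*α*x₂))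
      + (3*Real.sqrt 3*α/32) * sin (2*α*x₁) * (sin (2*α*x₂) - sin (2*α*x₃))
      + (3*α/32) * cos (2*α*x₁) * (sin (2*α*x₃) + sin (2*α*x₂)) := by
  rw [pd1_V1, pd2_V1, pd3_V1]
  simp only [V1, V2, V3, mul_assoc (2 : ℝ), sin_two_mul, cos_two_mul, sin_add, cos_add, sin_sub,
    cos_sub, sin_pi_div_two, cos_pi_div_two, sin_pi_div_three, cos_pi_div_three]
  have sqrt_three_sq : √3 ^ 2 = 3 := sq_sqrt (by norm_num)
  have pythagoras₁ := sin_sq_add_cos_sq (α * x₁)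
  have pythagoras₂ := sin_sq_add_cos_sq (α * x₂)
  have pythagoras₃ := sin_sq_add_cos_sq (α * x₃)
  -- Both sides are now polynomials in `√3`, `sin (α * xᵢ)`, `cos (α * xᵢ)` that agree modulo
  -- the four relations above.
  grind
end

section
/- Convolving the 3-dimensional heat kernel with the initial field v⁰ (phases ξ₁=−π/3, ξ₂=π/3, ξ₃=π/2) yields v⁰(x)e^{−3α²κt}: for t > 0, (2√(πκt))^{−3} ∫_{ℝ³} v⁰ᵢ(y) e^{−|x−y|²/(4κt)} dy = v⁰ᵢ(x) e^{−3α²κt} for each i = 1,2,3. -/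
/-!
Each component of `v⁰` is a difference of two products `∏ᵢ sin (α yᵢ + φᵢ)` (using
`cos (z + θ) = sin (z + θ + π/2)`). The Gaussian factorises over the coordinates, so by Fubini the
integral of such a product is a product of one-dimensional Gaussian convolutions, and each of
these multiplies `sin (a · + φ)` by `2 √(π c) e^{-a² c}`: this is the imaginary part of the
Gaussian integral of `e^{i (a y + φ)}`, computed by completing the square.
-/

open Real MeasureTheory

open Complex in
lemma exp_ofReal_mul_I_mul_exp_eq_exp_quadratic {c : ℝ} (hc : 0 < c) (a φ x y : ℝ) :
    cexp (((a * y + φ : ℝ) : ℂ) * I) * (rexp (-(x - y) ^ 2 / (4 * c)) : ℂ)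
      = cexp (-(4 * c : ℂ)⁻¹ * y ^ 2 + (x / (2 * c) + I * a) * y + (-x ^ 2 / (4 * c) + I * φ)) := by
  have : (c : ℂ) ≠ 0 := by exact_mod_cast hc.ne'
  rw [ofReal_exp, ← Complex.exp_add]
  congr 1
  push_cast
  field_simp
  ring

lemma re_neg_inv_four_mul_neg {c : ℝ} (hc : 0 < c) : (-(4 * c : ℂ)⁻¹).re < 0 := by
  rw [Complex.neg_re, neg_lt_zero, ← Complex.ofReal_ofNat, ← Complex.ofReal_mul,
    ← Complex.ofReal_inv, Complex.ofReal_re]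
  positivity

open Complex in
lemma integrable_exp_ofReal_mul_I_mul_exp_neg_sq_div {c : ℝ} (hc : 0 < c) (a φ x : ℝ) :
    Integrable fun y : ℝ => cexp (((a * y + φ : ℝ) : ℂ) * I) * (rexp (-(x - y) ^ 2 / (4 * c)) : ℂ) := by
  simp_rw [exp_ofReal_mul_I_mul_exp_eq_exp_quadratic hc]
  exact integrable_cexp_quadratic' (re_neg_inv_four_mul_neg hc) _ _

open Complex in
lemma integral_exp_ofReal_mul_I_mul_exp_neg_sq_div {c : ℝ} (hc : 0 < c) (a φ x : ℝ) :
    ∫ y : ℝ, cexp (((a * y + φ : ℝ) : ℂ) * I) * (rexp (-(x - y) ^ 2 / (4 * c)) : ℂ)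
      = ((2 * √(π * c) * rexp (-a ^ 2 * c) : ℝ) : ℂ) * cexp (((a * x + φ : ℝ) : ℂ) * I) := by
  simp_rw [exp_ofReal_mul_I_mul_exp_eq_exp_quadratic hc]
  rw [integral_cexp_quadratic (re_neg_inv_four_mul_neg hc)]
  have hsqrt : ((π : ℂ) / -(-(4 * c : ℂ)⁻¹)) ^ (1 / 2 : ℂ) = ((2 * √(π * c) : ℝ) : ℂ) := by
    have h4 : √(4 * (π * c)) = 2 * √(π * c) := by
      rw [Real.sqrt_mul (by norm_num), show (4 : ℝ) = 2 ^ 2 by norm_num,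
        Real.sqrt_sq (by norm_num)]
    rw [neg_neg, div_inv_eq_mul, ← h4, Real.sqrt_eq_rpow, ofReal_cpow (by positivity)]
    push_cast
    ring_nf
  have hc' : (c : ℂ) ≠ 0 := by exact_mod_cast hc.ne'
  rw [hsqrt, ofReal_mul _ (rexp _), ofReal_exp, mul_assoc, ← Complex.exp_add]
  congr 2
  push_cast
  field_simp
  ring_nf
  rw [I_sq]
  ring

lemma im_exp_ofReal_mul_I_mul_ofReal (θ r : ℝ) :
    (Complex.exp (θ * Complex.I) * r).im = sin θ * r := by
  rw [Complex.im_mul_ofReal, Complex.exp_ofReal_mul_I_im]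

lemma integrable_sin_mul_exp_neg_sq_div {c : ℝ} (hc : 0 < c) (a φ x : ℝ) :
    Integrable fun y : ℝ => sin (a * y + φ) * rexp (-(x - y) ^ 2 / (4 * c)) := by
  simpa only [RCLike.im_to_complex, im_exp_ofReal_mul_I_mul_ofReal]
    using (integrable_exp_ofReal_mul_I_mul_exp_neg_sq_div hc a φ x).im

lemma integral_sin_mul_exp_neg_sq_div {c : ℝ} (hc : 0 < c) (a φ x : ℝ) :
    ∫ y : ℝ, sin (a * y + φ) * rexp (-(x - y) ^ 2 / (4 * c))
      = 2 * √(π * c) * rexp (-a ^ 2 * c) * sin (a * x + φ) := by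
  have h := integral_im (integrable_exp_ofReal_mul_I_mul_exp_neg_sq_div hc a φ x)
  simp only [RCLike.im_to_complex, im_exp_ofReal_mul_I_mul_ofReal,
    integral_exp_ofReal_mul_I_mul_exp_neg_sq_div hc] at h
  rw [h, Complex.im_ofReal_mul, Complex.exp_ofReal_mul_I_im]

lemma integral_prod_mul_prod_mul (f₁ f₂ f₃ : ℝ → ℝ) :
    ∫ y : ℝ × ℝ × ℝ, f₁ y.1 * (f₂ y.2.1 * f₃ y.2.2)
      = (∫ y, f₁ y) * (∫ y, f₂ y) * ∫ y, f₃ y := by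
  rw [mul_assoc]
  exact (integral_prod_mul f₁ fun v : ℝ × ℝ => f₂ v.1 * f₃ v.2).trans
    (congrArg _ (integral_prod_mul f₂ f₃))

noncomputable def sinWave (k φ : ℝ × ℝ × ℝ) (y : ℝ × ℝ × ℝ) : ℝ :=
  sin (k.1 * y.1 + φ.1) * sin (k.2.1 * y.2.1 + φ.2.1) * sin (k.2.2 * y.2.2 + φ.2.2)

/-- Unnormalised heat kernel; `c` plays the role of `κ t`. -/
noncomputable def gaussianWeight (c : ℝ) (x y : ℝ × ℝ × ℝ) : ℝ :=
  rexp (-((x.1 - y.1) ^ 2 + (x.2.1 - y.2.1) ^ 2 + (x.2.2 - y.2.2) ^ 2) / (4 * c))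

lemma sinWave_mul_gaussianWeight (c : ℝ) (k φ x y : ℝ × ℝ × ℝ) :
    sinWave k φ y * gaussianWeight c x y
      = sin (k.1 * y.1 + φ.1) * rexp (-(x.1 - y.1) ^ 2 / (4 * c))
        * (sin (k.2.1 * y.2.1 + φ.2.1) * rexp (-(x.2.1 - y.2.1) ^ 2 / (4 * c))
          * (sin (k.2.2 * y.2.2 + φ.2.2) * rexp (-(x.2.2 - y.2.2) ^ 2 / (4 * c)))) := by
  have hsplit : gaussianWeight c x y = rexp (-(x.1 - y.1) ^ 2 / (4 * c))
      * rexp (-(x.2.1 - y.2.1) ^ 2 / (4 * c)) * rexp (-(x.2.2 - y.2.2) ^ 2 / (4 * c)) := by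
    rw [gaussianWeight, ← Real.exp_add, ← Real.exp_add]
    ring_nf
  rw [hsplit, sinWave]
  ring

lemma integrable_sinWave_mul_gaussianWeight {c : ℝ} (hc : 0 < c) (k φ x : ℝ × ℝ × ℝ) :
    Integrable fun y => sinWave k φ y * gaussianWeight c x y := by
  simp_rw [sinWave_mul_gaussianWeight]
  exact (integrable_sin_mul_exp_neg_sq_div hc k.1 φ.1 x.1).mul_prod
    ((integrable_sin_mul_exp_neg_sq_div hc k.2.1 φ.2.1 x.2.1).mul_prod
      (integrable_sin_mul_exp_neg_sq_div hc k.2.2 φ.2.2 x.2.2))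

lemma integral_sinWave_mul_gaussianWeight {c : ℝ} (hc : 0 < c) (k φ x : ℝ × ℝ × ℝ) :
    ∫ y, sinWave k φ y * gaussianWeight c x y
      = (2 * √(π * c)) ^ 3 * rexp (-(k.1 ^ 2 + k.2.1 ^ 2 + k.2.2 ^ 2) * c) * sinWave k φ x := by
  simp_rw [sinWave_mul_gaussianWeight]
  rw [integral_prod_mul_prod_mul (fun u => sin (k.1 * u + φ.1) * rexp (-(x.1 - u) ^ 2 / (4 * c)))
    (fun u => sin (k.2.1 * u + φ.2.1) * rexp (-(x.2.1 - u) ^ 2 / (4 * c)))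
    (fun u => sin (k.2.2 * u + φ.2.2) * rexp (-(x.2.2 - u) ^ 2 / (4 * c))),
    integral_sin_mul_exp_neg_sq_div hc, integral_sin_mul_exp_neg_sq_div hc,
    integral_sin_mul_exp_neg_sq_div hc, sinWave]
  have hexp : rexp (-(k.1 ^ 2 + k.2.1 ^ 2 + k.2.2 ^ 2) * c)
      = rexp (-k.1 ^ 2 * c) * rexp (-k.2.1 ^ 2 * c) * rexp (-k.2.2 ^ 2 * c) := by
    rw [← Real.exp_add, ← Real.exp_add]
    ring_nf
  rw [hexp]
  ring

lemma integral_mul_gaussianWeight_of_eq_sinWave_sub {c : ℝ} (hc : 0 < c)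
    {k φ ψ : ℝ × ℝ × ℝ} {F : ℝ × ℝ × ℝ → ℝ} (hF : ∀ y, F y = sinWave k φ y - sinWave k ψ y)
    (x : ℝ × ℝ × ℝ) :
    ((2 * √(π * c)) ^ 3)⁻¹ * ∫ y, F y * gaussianWeight c x y
      = F x * rexp (-(k.1 ^ 2 + k.2.1 ^ 2 + k.2.2 ^ 2) * c) := by
  simp_rw [hF, sub_mul]
  rw [integral_sub (integrable_sinWave_mul_gaussianWeight hc k φ x)
    (integrable_sinWave_mul_gaussianWeight hc k ψ x), integral_sinWave_mul_gaussianWeight hc,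
    integral_sinWave_mul_gaussianWeight hc]
  have : (2 * √(π * c)) ^ 3 ≠ 0 := by positivity
  field_simp

lemma V1_eq_sinWave_sub (α y₁ y₂ y₃ : ℝ) :
    V1 α y₁ y₂ y₃ = sinWave (α, α, α) (-(π / 3), 5 * π / 6, π / 2) (y₁, y₂, y₃)
      - sinWave (α, α, α) (π / 3, π / 2, π / 6) (y₁, y₂, y₃) := by
  have hcos (z θ : ℝ) : cos (z + θ) = sin (z + (θ + π / 2)) := by
    rw [← add_assoc, sin_add_pi_div_two]
  rw [V1, sinWave, sinWave, sub_eq_add_neg (α * y₁), sub_eq_add_neg (α * y₃), hcos, hcos]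
  ring_nf

lemma V2_eq_sinWave_sub (α y₁ y₂ y₃ : ℝ) :
    V2 α y₁ y₂ y₃ = sinWave (α, α, α) (π / 2, -(π / 3), 5 * π / 6) (y₁, y₂, y₃)
      - sinWave (α, α, α) (π / 6, π / 3, π / 2) (y₁, y₂, y₃) := by
  rw [V2, V1_eq_sinWave_sub]
  simp only [sinWave]
  ring

lemma V3_eq_sinWave_sub (α y₁ y₂ y₃ : ℝ) :
    V3 α y₁ y₂ y₃ = sinWave (α, α, α) (5 * π / 6, π / 2, -(π / 3)) (y₁, y₂, y₃)
      - sinWave (α, α, α) (π / 2, π / 6, π / 3) (y₁, y₂, y₃) := by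
  rw [V3, V1_eq_sinWave_sub]
  simp only [sinWave]
  ring

theorem heat_kernel_convolution_v0 (α κ t x₁ x₂ x₃ : ℝ) (hκ : 0 < κ) (ht : 0 < t) :
    ((2 * Real.sqrt (π * κ * t))^3)⁻¹ *
        (∫ y : ℝ × ℝ × ℝ, V1 α y.1 y.2.1 y.2.2 *
          exp (-((x₁ - y.1)^2 + (x₂ - y.2.1)^2 + (x₃ - y.2.2)^2) / (4*κ*t)))
      = V1 α x₁ x₂ x₃ * exp (-3 * α^2 * κ * t) ∧
    ((2 * Real.sqrt (π * κ * t))^3)⁻¹ *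
        (∫ y : ℝ × ℝ × ℝ, V2 α y.1 y.2.1 y.2.2 *
          exp (-((x₁ - y.1)^2 + (x₂ - y.2.1)^2 + (x₃ - y.2.2)^2) / (4*κ*t)))
      = V2 α x₁ x₂ x₃ * exp (-3 * α^2 * κ * t) ∧
    ((2 * Real.sqrt (π * κ * t))^3)⁻¹ *
        (∫ y : ℝ × ℝ × ℝ, V3 α y.1 y.2.1 y.2.2 *
          exp (-((x₁ - y.1)^2 + (x₂ - y.2.1)^2 + (x₃ - y.2.2)^2) / (4*κ*t)))
      = V3 α x₁ x₂ x₃ * exp (-3 * α^2 * κ * t) := by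
  have hc : 0 < κ * t := mul_pos hκ ht
  rw [show π * κ * t = π * (κ * t) by ring, show (4 : ℝ) * κ * t = 4 * (κ * t) by ring,
    show -3 * α ^ 2 * κ * t = -(α ^ 2 + α ^ 2 + α ^ 2) * (κ * t) by ring]
  exact ⟨integral_mul_gaussianWeight_of_eq_sinWave_sub hc
      (fun y => V1_eq_sinWave_sub α y.1 y.2.1 y.2.2) (x₁, x₂, x₃),
    integral_mul_gaussianWeight_of_eq_sinWave_sub hc
      (fun y => V2_eq_sinWave_sub α y.1 y.2.1 y.2.2) (x₁, x₂, x₃),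
    integral_mul_gaussianWeight_of_eq_sinWave_sub hc
      (fun y => V3_eq_sinWave_sub α y.1 y.2.1 y.2.2) (x₁, x₂, x₃)⟩
end

section
/- For the solution v(x,t) = v⁰(x)e^{−3α²κt} with ξ₁=−π/3, ξ₂=π/3, ξ₃=π/2, the divergence of v vanishes for every t ≥ 0: Σᵢ ∂vᵢ/∂xᵢ (x,t) = 0 for all x ∈ ℝ³, t ≥ 0. -/
open Real

lemma hsin (α ξ y : ℝ) : HasDerivAt (fun z => Real.sin (α * z + ξ)) (Real.cos (α * y + ξ) * α) y := by
  have h : HasDerivAt (fun z => α * z + ξ) α y := by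
    simpa using ((hasDerivAt_id y).const_mul α).add_const ξ
  simpa using h.sin

lemma hsin' (α ξ y : ℝ) : HasDerivAt (fun z => Real.sin (α * z - ξ)) (Real.cos (α * y - ξ) * α) y := by
  have h : HasDerivAt (fun z => α * z - ξ) α y := by
    simpa using ((hasDerivAt_id y).const_mul α).sub_const ξ
  simpa using h.sin

lemma hV1 (α b c y : ℝ) : HasDerivAt (fun z => V1 α z b c)
    (Real.cos (α * y - π/3) * α * Real.cos (α * b + π/3) * Real.sin (α * c + π/2)
      - Real.cos (α * y + π/3) * α * Real.cos (α * c - π/3) * Real.sin (α * b + π/2)) y := by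
  simp only [V1]
  exact (((hsin' α (π/3) y).mul_const (Real.cos (α * b + π/3))).mul_const (Real.sin (α * c + π/2))).sub
    (((hsin α (π/3) y).mul_const (Real.cos (α * c - π/3))).mul_const (Real.sin (α * b + π/2)))

theorem time_dependent_divergence_free (α κ : ℝ) (hκ : 0 < κ)
    (x₁ x₂ x₃ t : ℝ) (ht : 0 ≤ t) :
    pd1 (fun a b c => V1 α a b c * exp (-3 * α^2 * κ * t)) x₁ x₂ x₃
      + pd2 (fun a b c => V2 α a b c * exp (-3 * α^2 * κ * t)) x₁ x₂ x₃
      + pd3 (fun a b c => V3 α a b c * exp (-3 * α^2 * κ * t)) x₁ x₂ x₃ = 0 := by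
  simp only [pd1, pd2, pd3, V2, V3]
  rw [((hV1 α x₂ x₃ x₁).mul_const _).deriv, ((hV1 α x₃ x₁ x₂).mul_const _).deriv,
    ((hV1 α x₁ x₂ x₃).mul_const _).deriv]
  ring
end
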